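/- The operadic compositions on symmetric groups satisfy sequential associativity: for all permutations x of {1,…,r}, y of {1,…,s}, z of {1,…,t}, and indices 1 ≤ i ≤ r and 1 ≤ j ≤ s, one has (x ∘_i y) ∘_{i+j−1} z = x ∘_i (y ∘_j z) in S_{r+s+t−2}. -/
import Mathlib


/-- The operadic composition `σ ∘ᵢ τ` of permutations, as an explicit function on
`{1, …, r+s-1}`.  Here `σ` is a bijection of `{1, …, r}`, `τ` is a bijection of
`{1, …, s}`, `1 ≤ i ≤ r`, and `p = σ⁻¹(i)`. -/
def opComp (σ τ : ℕ → ℕ) (s i p : ℕ) : ℕ → ℕ := fun k =>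
  if k < p then
    if σ k < i then σ k else σ k + s - 1
  else if k ≤ p + s - 1 then
    τ (k - p + 1) + i - 1
  else
    if σ (k - s + 1) < i then σ (k - s + 1) else σ (k - s + 1) + s - 1

lemma opComp_lo (σ τ : ℕ → ℕ) (s i p k : ℕ) (h : k < p) :
    opComp σ τ s i p k = if σ k < i then σ k else σ k + s - 1 := by
  simp [opComp, h]

lemma opComp_mid (σ τ : ℕ → ℕ) (s i p k : ℕ) (h1 : ¬ k < p) (h2 : k ≤ p + s - 1) :
    opComp σ τ s i p k = τ (k - p + 1) + i - 1 := by
  simp [opComp, h1, h2]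

lemma opComp_hi (σ τ : ℕ → ℕ) (s i p k : ℕ) (h1 : ¬ k < p) (h2 : ¬ k ≤ p + s - 1) :
    opComp σ τ s i p k
      = if σ (k - s + 1) < i then σ (k - s + 1) else σ (k - s + 1) + s - 1 := by
  simp [opComp, h1, h2]

/-- Sequential associativity of the operadic compositions on symmetric
groups: for `x ∈ S_r`, `y ∈ S_s`, `z ∈ S_t`, `1 ≤ i ≤ r` and `1 ≤ j ≤ s`,
`(x ∘ᵢ y) ∘_{i+j-1} z = x ∘ᵢ (y ∘ⱼ z)` in `S_{r+s+t-2}`.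
Here `p = x⁻¹(i)`, `q = y⁻¹(j)` and `p' = (x ∘ᵢ y)⁻¹(i+j-1)`. -/
theorem stmt5 (r s t i j : ℕ) (hs : 1 ≤ s) (ht : 1 ≤ t)
    (hi : 1 ≤ i) (hir : i ≤ r) (hj : 1 ≤ j) (hjs : j ≤ s)
    (x y z : ℕ → ℕ)
    (hx : Set.BijOn x (Set.Icc 1 r) (Set.Icc 1 r))
    (hy : Set.BijOn y (Set.Icc 1 s) (Set.Icc 1 s))
    (hz : Set.BijOn z (Set.Icc 1 t) (Set.Icc 1 t))
    (p : ℕ) (hp : p ∈ Set.Icc 1 r) (hxp : x p = i)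
    (q : ℕ) (hq : q ∈ Set.Icc 1 s) (hyq : y q = j)
    (p' : ℕ) (hp' : p' ∈ Set.Icc 1 (r + s - 1))
    (hxyp' : opComp x y s i p p' = i + j - 1) :
    Set.EqOn (opComp (opComp x y s i p) z t (i + j - 1) p')
      (opComp x (opComp y z t j q) (s + t - 1) i p)
      (Set.Icc 1 (r + s + t - 2)) := by
  obtain ⟨hp1, hp2⟩ := hp
  obtain ⟨hq1, hq2⟩ := hq
  obtain ⟨hp'1, hp'2⟩ := hp'
  have hxmem : ∀ k, 1 ≤ k → k ≤ r → 1 ≤ x k ∧ x k ≤ r := fun k h1 h2 => hx.mapsTo ⟨h1, h2⟩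
  have hymem : ∀ k, 1 ≤ k → k ≤ s → 1 ≤ y k ∧ y k ≤ s := fun k h1 h2 => hy.mapsTo ⟨h1, h2⟩
  have hxne : ∀ k, 1 ≤ k → k ≤ r → k ≠ p → x k ≠ i := fun k h1 h2 hne hc =>
    hne (hx.injOn ⟨h1, h2⟩ ⟨hp1, hp2⟩ (by rw [hc, hxp]))
  have hyne : ∀ k, 1 ≤ k → k ≤ s → k ≠ q → y k ≠ j := fun k h1 h2 hne hc =>
    hne (hy.injOn ⟨h1, h2⟩ ⟨hq1, hq2⟩ (by rw [hc, hyq]))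
  have hp'eq : p' = p + q - 1 := by
    by_cases h1 : p' < p
    · exfalso
      rw [opComp_lo _ _ _ _ _ _ h1] at hxyp'
      have h2 := hxmem p' hp'1 (by omega)
      have h3 := hxne p' hp'1 (by omega) (by omega)
      split_ifs at hxyp' <;> omega
    · by_cases h2 : p' ≤ p + s - 1
      · rw [opComp_mid _ _ _ _ _ _ h1 h2] at hxyp'
        have hm : p' - p + 1 = q := by
          apply hy.injOn ⟨by omega, by omega⟩ ⟨hq1, hq2⟩
          rw [hyq]; omega
        omega
      · exfalso
        rw [opComp_hi _ _ _ _ _ _ h1 h2] at hxyp'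
        have h3 := hxmem (p' - s + 1) (by omega) (by omega)
        have h4 := hxne (p' - s + 1) (by omega) (by omega) (by omega)
        split_ifs at hxyp' <;> omega
  subst hp'eq
  intro k hk
  obtain ⟨hk1, hk2⟩ := hk
  rcases lt_or_ge k p with hkp | hkp
  · -- Region A : k < p
    have hA : opComp x y s i p k = if x k < i then x k else x k + s - 1 :=
      opComp_lo _ _ _ _ _ _ hkp
    rw [show (opComp (opComp x y s i p) z t (i + j - 1) (p + q - 1)) k
          = (opComp (opComp x y s i p) z t (i + j - 1) (p + q - 1)) k from rfl]
    rw [opComp_lo _ _ _ _ _ _ (show k < p + q - 1 by omega), hA,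
        opComp_lo _ _ _ _ _ _ hkp]
    have h2 := hxmem k hk1 (by omega)
    have h3 := hxne k hk1 (by omega) (by omega)
    split_ifs <;> omega
  · rcases lt_or_ge k (p + q - 1) with hkq | hkq
    · -- Region B : p ≤ k < p + q - 1
      have hA : opComp x y s i p k = y (k - p + 1) + i - 1 :=
        opComp_mid _ _ _ _ _ _ (by omega) (by omega)
      have hB : opComp y z t j q (k - p + 1)
          = if y (k - p + 1) < j then y (k - p + 1) else y (k - p + 1) + t - 1 :=
        opComp_lo _ _ _ _ _ _ (by omega)
      rw [opComp_lo _ _ _ _ _ _ hkq, hA,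
          opComp_mid _ _ _ _ _ _ (by omega) (by omega), hB]
      have h2 := hymem (k - p + 1) (by omega) (by omega)
      have h3 := hyne (k - p + 1) (by omega) (by omega) (by omega)
      split_ifs <;> omega
    · rcases le_or_gt k (p + q + t - 2) with hkt | hkt
      · -- Region C : p + q - 1 ≤ k ≤ p + q + t - 2
        have hB : opComp y z t j q (k - p + 1) = z (k - p + 1 - q + 1) + j - 1 :=
          opComp_mid _ _ _ _ _ _ (by omega) (by omega)
        rw [opComp_mid _ _ _ _ _ _ (by omega) (by omega),
            opComp_mid _ _ _ _ _ _ (by omega) (by omega), hB]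
        have harg : k - (p + q - 1) + 1 = k - p + 1 - q + 1 := by omega
        rw [harg]
        omega
      · rcases le_or_gt k (p + s + t - 2) with hks | hks
        · -- Region D : p + q + t - 1 ≤ k ≤ p + s + t - 2
          have hA : opComp x y s i p (k - t + 1) = y (k - t + 1 - p + 1) + i - 1 :=
            opComp_mid _ _ _ _ _ _ (by omega) (by omega)
          have hB : opComp y z t j q (k - p + 1)
              = if y (k - p + 1 - t + 1) < j then y (k - p + 1 - t + 1)
                else y (k - p + 1 - t + 1) + t - 1 :=
            opComp_hi _ _ _ _ _ _ (by omega) (by omega)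
          rw [opComp_hi _ _ _ _ _ _ (by omega) (by omega), hA,
              opComp_mid _ _ _ _ _ _ (by omega) (by omega), hB]
          have harg : k - t + 1 - p + 1 = k - p + 1 - t + 1 := by omega
          rw [harg]
          have h2 := hymem (k - p + 1 - t + 1) (by omega) (by omega)
          have h3 := hyne (k - p + 1 - t + 1) (by omega) (by omega) (by omega)
          split_ifs <;> omega
        · -- Region E : k > p + s + t - 2
          have hA : opComp x y s i p (k - t + 1)
              = if x (k - t + 1 - s + 1) < i then x (k - t + 1 - s + 1)
                else x (k - t + 1 - s + 1) + s - 1 :=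
            opComp_hi _ _ _ _ _ _ (by omega) (by omega)
          rw [opComp_hi _ _ _ _ _ _ (by omega) (by omega), hA,
              opComp_hi _ _ _ _ _ _ (by omega) (by omega)]
          have harg : k - t + 1 - s + 1 = k - (s + t - 1) + 1 := by omega
          rw [harg]
          have h2 := hxmem (k - (s + t - 1) + 1) (by omega) (by omega)
          have h3 := hxne (k - (s + t - 1) + 1) (by omega) (by omega) (by omega)
          split_ifs <;> omega
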